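/- arXiv:1911.07481 — 5 statements merged into one kernel-verified Lean document; each statement's English description precedes it below -/
import Mathlib

section
/- Let a > 0 be a real number and define f : ℝ → ℝ by f(x) = (2^x − 1)² / ((2^x − 1)² + a²). Then f is concave on the interval [log₂(a + 1), ∞). (This is the precise form of the paper's Lemma 1, which asserts concavity of f(x) = 1/(1 + a²/(2^x − 1)²) for x ≥ log₂ a when a ≫ 1.) -/
/-!
Writing `t = b^x - 1`, the derivative of `x ↦ t² / (t² + a²)` is
`2 a² log b · t (t + 1) / (t² + a²)²`. Since `t` increases with `x`, concavity reduces to this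
expression being antitone in `t` on `[a, ∞)`, and it is the product of the two positive antitone
functions `t / (t² + a²)` and `(t + 1) / (t² + a²)`; both are antitone there because
`s t ≥ a²` whenever `s, t ≥ a`.
-/

open Real Set

section

variable {a : ℝ}

lemma antitoneOn_add_div_sq_add_sq (ha : 0 < a) {c : ℝ} (hc : 0 ≤ c) :
    AntitoneOn (fun t : ℝ => (t + c) / (t ^ 2 + a ^ 2)) (Ici a) := by
  intro s hs t ht hst
  simp only [mem_Ici] at hs ht
  rw [div_le_div_iff₀ (by positivity) (by positivity)]
  have hs0 : 0 ≤ s := ha.le.trans hs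
  have ht0 : 0 ≤ t := ha.le.trans ht
  have hst_sq : a ^ 2 ≤ s * t := by nlinarith
  -- the difference of the two sides is `(t - s) (s t + c (s + t) - a²)`
  nlinarith [mul_nonneg (sub_nonneg.2 hst) (by positivity : 0 ≤ c * (s + t))]

lemma antitoneOn_mul_add_one_div_sq_add_sq_sq (ha : 0 < a) :
    AntitoneOn (fun t : ℝ => t * (t + 1) / (t ^ 2 + a ^ 2) ^ 2) (Ici a) := by
  intro s hs t ht hst
  have hs0 : 0 ≤ s := ha.le.trans hs
  have ht0 : 0 ≤ t := ha.le.trans ht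
  calc t * (t + 1) / (t ^ 2 + a ^ 2) ^ 2
      = (t + 0) / (t ^ 2 + a ^ 2) * ((t + 1) / (t ^ 2 + a ^ 2)) := by
        rw [div_mul_div_comm, add_zero, ← sq]
    _ ≤ (s + 0) / (s ^ 2 + a ^ 2) * ((s + 1) / (s ^ 2 + a ^ 2)) :=
        mul_le_mul (antitoneOn_add_div_sq_add_sq ha le_rfl hs ht hst)
          (antitoneOn_add_div_sq_add_sq ha zero_le_one hs ht hst) (by positivity) (by positivity)
    _ = s * (s + 1) / (s ^ 2 + a ^ 2) ^ 2 := by rw [div_mul_div_comm, add_zero, ← sq]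

lemma hasDerivAt_sq_div_sq_add_sq (ha : a ≠ 0) (t : ℝ) :
    HasDerivAt (fun t : ℝ => t ^ 2 / (t ^ 2 + a ^ 2)) (2 * a ^ 2 * t / (t ^ 2 + a ^ 2) ^ 2) t := by
  have hD : t ^ 2 + a ^ 2 ≠ 0 := by positivity
  refine ((hasDerivAt_pow 2 t).fun_div ((hasDerivAt_pow 2 t).add_const (a ^ 2)) hD).congr_deriv ?_
  field_simp
  ring

lemma hasDerivAt_rpow_sub_one_sq_div (ha : a ≠ 0) {b : ℝ} (hb : 0 < b) (x : ℝ) :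
    HasDerivAt (fun x : ℝ => (b ^ x - 1) ^ 2 / ((b ^ x - 1) ^ 2 + a ^ 2))
      (2 * a ^ 2 * log b * ((b ^ x - 1) * (b ^ x - 1 + 1) / ((b ^ x - 1) ^ 2 + a ^ 2) ^ 2)) x := by
  refine ((hasDerivAt_sq_div_sq_add_sq ha (b ^ x - 1)).comp x
    ((hasStrictDerivAt_const_rpow hb x).hasDerivAt.sub_const 1)).congr_deriv ?_
  ring

theorem concaveOn_rpow_sub_one_sq_div (ha : 0 < a) {b : ℝ} (hb : 1 < b) :
    ConcaveOn ℝ (Ici (logb b (a + 1)))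
      (fun x : ℝ => (b ^ x - 1) ^ 2 / ((b ^ x - 1) ^ 2 + a ^ 2)) := by
  have hderiv := hasDerivAt_rpow_sub_one_sq_div ha.ne' (zero_lt_one.trans hb)
  refine AntitoneOn.concaveOn_of_deriv (convex_Ici _)
    (fun x _ => (hderiv x).continuousAt.continuousWithinAt)
    (fun x _ => (hderiv x).differentiableAt.differentiableWithinAt) ?_
  rw [interior_Ici, funext fun x => (hderiv x).deriv]
  have hmono : MonotoneOn (fun x : ℝ => b ^ x - 1) (Ioi (logb b (a + 1))) :=
    fun x _ y _ hxy => sub_le_sub_right (rpow_le_rpow_of_exponent_le hb.le hxy) 1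
  have hmaps : MapsTo (fun x : ℝ => b ^ x - 1) (Ioi (logb b (a + 1))) (Ici a) := by
    intro x hx
    have := (logb_lt_iff_lt_rpow hb (by linarith)).1 hx
    simp only [mem_Ici]
    linarith
  have hanti := (antitoneOn_mul_add_one_div_sq_add_sq_sq ha).comp_MonotoneOn hmono hmaps
  exact fun x hx y hy hxy =>
    mul_le_mul_of_nonneg_left (hanti hx hy hxy) (by have := log_pos hb; positivity)

end

/-- Lemma 1 (precise form): for `a > 0`, the function
`f(x) = (2^x − 1)² / ((2^x − 1)² + a²)` is concave on `[log₂(a + 1), ∞)`. -/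
theorem stmt_0 (a : ℝ) (ha : 0 < a) :
    ConcaveOn ℝ (Set.Ici (Real.logb 2 (a + 1)))
      (fun x : ℝ => ((2 : ℝ) ^ x - 1) ^ 2 / (((2 : ℝ) ^ x - 1) ^ 2 + a ^ 2)) :=
  concaveOn_rpow_sub_one_sq_div ha one_lt_two
end

section
/- Let a > 0 be a real number, define f : ℝ → ℝ by f(x) = (2^x − 1)² / ((2^x − 1)² + a²), and define the cubic h_a : ℝ → ℝ by h_a(y) = 2y³ − 3y² − 2a²y + (a² + 1). Then for every real x, writing y = 2^x, the second derivative of f at x equals f''(x) = −2a²(ln 2)² · y · h_a(y) / (a² + (y − 1)²)³. -/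
/-! With `y = 2^x` one has `d/dx = log 2 · y d/dy`, so `f'' = (log 2)² · y · (y φ')'(y)` for
`φ(y) = (y - 1)² / ((y - 1)² + a²)`; the cubic `h_a` is the numerator of `(y φ')'`. -/

open Real

section ConstRpow

variable {b : ℝ} {g : ℝ → ℝ} {g' : ℝ → ℝ}

theorem hasDerivAt_comp_const_rpow (hb : 0 < b) {c x : ℝ} (hg : HasDerivAt g c (b ^ x)) :
    HasDerivAt (fun x : ℝ => g (b ^ x)) (log b * (b ^ x * c)) x :=
  (hg.comp x (hasStrictDerivAt_const_rpow hb x).hasDerivAt).congr_deriv (by ring)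

theorem deriv_deriv_comp_const_rpow (hb : 0 < b) (hg : ∀ t, HasDerivAt g (g' t) t) {k x : ℝ}
    (hk : HasDerivAt (fun t => t * g' t) k (b ^ x)) :
    deriv (deriv fun x : ℝ => g (b ^ x)) x = log b ^ 2 * b ^ x * k := by
  have hderiv : deriv (fun x : ℝ => g (b ^ x)) = fun x => log b * (b ^ x * g' (b ^ x)) :=
    funext fun x => (hasDerivAt_comp_const_rpow hb (hg _)).deriv
  rw [hderiv, ((hasDerivAt_comp_const_rpow hb hk).const_mul (log b)).deriv]
  ring

end ConstRpow

section SubOneSqDivAddSq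

variable {a : ℝ}

theorem hasDerivAt_sub_one_sq_div_add_sq (ha : a ≠ 0) (t : ℝ) :
    HasDerivAt (fun t => (t - 1) ^ 2 / ((t - 1) ^ 2 + a ^ 2))
      (2 * a ^ 2 * (t - 1) / ((t - 1) ^ 2 + a ^ 2) ^ 2) t := by
  have hD : (t - 1) ^ 2 + a ^ 2 ≠ 0 := by positivity
  have hsq := ((hasDerivAt_id' t).sub_const 1).fun_pow 2
  refine (hsq.fun_div (hsq.add_const (a ^ 2)) hD).congr_deriv ?_
  field_simp
  ring

theorem hasDerivAt_mul_deriv_sub_one_sq_div_add_sq (ha : a ≠ 0) (t : ℝ) :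
    HasDerivAt (fun t => t * (2 * a ^ 2 * (t - 1) / ((t - 1) ^ 2 + a ^ 2) ^ 2))
      (-2 * a ^ 2 * (2 * t ^ 3 - 3 * t ^ 2 - 2 * a ^ 2 * t + (a ^ 2 + 1)) /
        ((t - 1) ^ 2 + a ^ 2) ^ 3) t := by
  have hD : (t - 1) ^ 2 + a ^ 2 ≠ 0 := by positivity
  have hs := (hasDerivAt_id' t).sub_const 1
  have hnum := (hasDerivAt_id' t).fun_mul (hs.const_mul (2 * a ^ 2))
  have hden := ((hs.fun_pow 2).add_const (a ^ 2)).fun_pow 2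
  simp only [← mul_div_assoc]
  refine (hnum.fun_div hden (pow_ne_zero 2 hD)).congr_deriv ?_
  field_simp
  ring

end SubOneSqDivAddSq

/-- For `a > 0`, `f(x) = (2^x − 1)² / ((2^x − 1)² + a²)` and the cubic
`h_a(y) = 2y³ − 3y² − 2a²y + (a² + 1)`, writing `y = 2^x`, the second derivative satisfies
`f''(x) = −2a²(ln 2)² · y · h_a(y) / (a² + (y − 1)²)³`. -/
theorem stmt_2 (a : ℝ) (ha : 0 < a)
    (f : ℝ → ℝ)
    (hf : ∀ x, f x = ((2 : ℝ) ^ x - 1) ^ 2 / (((2 : ℝ) ^ x - 1) ^ 2 + a ^ 2))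
    (h : ℝ → ℝ)
    (hh : ∀ y, h y = 2 * y ^ 3 - 3 * y ^ 2 - 2 * a ^ 2 * y + (a ^ 2 + 1)) :
    ∀ x : ℝ,
      deriv (deriv f) x =
        -2 * a ^ 2 * (Real.log 2) ^ 2 * (2 : ℝ) ^ x * h ((2 : ℝ) ^ x) /
          (a ^ 2 + ((2 : ℝ) ^ x - 1) ^ 2) ^ 3 := by
  intro x
  rw [show f = fun x => ((2 : ℝ) ^ x - 1) ^ 2 / (((2 : ℝ) ^ x - 1) ^ 2 + a ^ 2) from funext hf,
    deriv_deriv_comp_const_rpow two_pos (hasDerivAt_sub_one_sq_div_add_sq ha.ne')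
      (hasDerivAt_mul_deriv_sub_one_sq_div_add_sq ha.ne' _), hh, add_comm (a ^ 2)]
  ring
end

section
/- Let a ≥ 1 be a real number and define the cubic h_a : ℝ → ℝ by h_a(y) = 2y³ − 3y² − 2a²y + (a² + 1). Then h_a has exactly three real roots y₂ < y₃ < y₁, and they satisfy y₂ ∈ (−a, −a + 1), y₃ ∈ (0, 1), and y₁ ∈ (a, a + 1). (This makes precise the approximate root locations y₁ ≈ a, y₂ ≈ −a, y₃ ≈ 0 used in the proof of Lemma 1.) -/
/-!
The values `h_a(-a) = h_a(a) = 1 - 2a² < 0`, `h_a(0) = a² + 1 > 0`, `h_a(1) = -a² < 0` and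
`h_a(1 - a) = h_a(a + 1) = 2a² > 0` give three sign changes, hence by the intermediate value
theorem a root in each of the three intervals. A cubic with three distinct roots factors through
them, so there are no others.
-/

section Cubic

variable {K : Type*} [Field K] {α β γ δ x₁ x₂ x₃ : K}

theorem cubic_divided_difference_eq_zero (h₁₂ : x₁ ≠ x₂)
    (h : α * x₁ ^ 3 + β * x₁ ^ 2 + γ * x₁ + δ = α * x₂ ^ 3 + β * x₂ ^ 2 + γ * x₂ + δ) :
    α * (x₁ ^ 2 + x₁ * x₂ + x₂ ^ 2) + β * (x₁ + x₂) + γ = 0 := by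
  have : (x₁ - x₂) * (α * (x₁ ^ 2 + x₁ * x₂ + x₂ ^ 2) + β * (x₁ + x₂) + γ) = 0 := by
    linear_combination h
  exact (mul_eq_zero.mp this).resolve_left (sub_ne_zero.mpr h₁₂)

theorem cubic_eq_mul_of_roots (h₁₂ : x₁ ≠ x₂) (h₁₃ : x₁ ≠ x₃) (h₂₃ : x₂ ≠ x₃)
    (h₁ : α * x₁ ^ 3 + β * x₁ ^ 2 + γ * x₁ + δ = 0) (h₂ : α * x₂ ^ 3 + β * x₂ ^ 2 + γ * x₂ + δ = 0)
    (h₃ : α * x₃ ^ 3 + β * x₃ ^ 2 + γ * x₃ + δ = 0) (y : K) :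
    α * y ^ 3 + β * y ^ 2 + γ * y + δ = α * ((y - x₁) * (y - x₂) * (y - x₃)) := by
  have d₁₂ := cubic_divided_difference_eq_zero h₁₂ (h₁.trans h₂.symm)
  have d₁₃ := cubic_divided_difference_eq_zero h₁₃ (h₁.trans h₃.symm)
  have vieta_sum : α * (x₁ + x₂ + x₃) + β = 0 := by
    have : (x₂ - x₃) * (α * (x₁ + x₂ + x₃) + β) = 0 := by linear_combination d₁₂ - d₁₃
    exact (mul_eq_zero.mp this).resolve_left (sub_ne_zero.mpr h₂₃)
  linear_combination (y - x₁) * (y - x₂) * vieta_sum + (y - x₁) * d₁₂ + h₁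

theorem eq_or_eq_or_eq_of_cubic_eq_zero (hα : α ≠ 0) (h₁₂ : x₁ ≠ x₂) (h₁₃ : x₁ ≠ x₃)
    (h₂₃ : x₂ ≠ x₃) (h₁ : α * x₁ ^ 3 + β * x₁ ^ 2 + γ * x₁ + δ = 0)
    (h₂ : α * x₂ ^ 3 + β * x₂ ^ 2 + γ * x₂ + δ = 0) (h₃ : α * x₃ ^ 3 + β * x₃ ^ 2 + γ * x₃ + δ = 0)
    {y : K} (hy : α * y ^ 3 + β * y ^ 2 + γ * y + δ = 0) : y = x₁ ∨ y = x₂ ∨ y = x₃ := by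
  rw [cubic_eq_mul_of_roots h₁₂ h₁₃ h₂₃ h₁ h₂ h₃] at hy
  simpa only [mul_eq_zero, hα, false_or, sub_eq_zero, or_assoc] using hy

end Cubic

/-- For `a ≥ 1`, the cubic `h_a(y) = 2y³ − 3y² − 2a²y + (a² + 1)` has exactly three real
roots `y₂ < y₃ < y₁`, with `y₂ ∈ (−a, −a+1)`, `y₃ ∈ (0, 1)` and `y₁ ∈ (a, a+1)`. -/
theorem stmt_4 (a : ℝ) (ha : 1 ≤ a)
    (h : ℝ → ℝ)
    (hh : ∀ y, h y = 2 * y ^ 3 - 3 * y ^ 2 - 2 * a ^ 2 * y + (a ^ 2 + 1)) :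
    ∃ y₁ y₂ y₃ : ℝ,
      y₂ < y₃ ∧ y₃ < y₁ ∧
      h y₁ = 0 ∧ h y₂ = 0 ∧ h y₃ = 0 ∧
      (∀ y : ℝ, h y = 0 → y = y₁ ∨ y = y₂ ∨ y = y₃) ∧
      y₂ ∈ Set.Ioo (-a) (-a + 1) ∧
      y₃ ∈ Set.Ioo (0 : ℝ) 1 ∧
      y₁ ∈ Set.Ioo a (a + 1) := by
  have hcont : Continuous h := by
    rw [funext hh]; fun_prop
  have h_neg_a : h (-a) < 0 := by rw [hh]; nlinarith
  have h_one_sub_a : 0 < h (-a + 1) := by rw [hh]; nlinarith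
  have h_zero : 0 < h 0 := by rw [hh]; nlinarith
  have h_one : h 1 < 0 := by rw [hh]; nlinarith
  have h_a : h a < 0 := by rw [hh]; nlinarith
  have h_a_add_one : 0 < h (a + 1) := by rw [hh]; nlinarith
  obtain ⟨y₂, hy₂, hy₂_root⟩ := intermediate_value_Ioo (by linarith) hcont.continuousOn
    (show (0 : ℝ) ∈ Set.Ioo (h (-a)) (h (-a + 1)) from ⟨h_neg_a, h_one_sub_a⟩)
  obtain ⟨y₃, hy₃, hy₃_root⟩ := intermediate_value_Ioo' zero_le_one hcont.continuousOn
    (show (0 : ℝ) ∈ Set.Ioo (h 1) (h 0) from ⟨h_one, h_zero⟩)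
  obtain ⟨y₁, hy₁, hy₁_root⟩ := intermediate_value_Ioo (by linarith) hcont.continuousOn
    (show (0 : ℝ) ∈ Set.Ioo (h a) (h (a + 1)) from ⟨h_a, h_a_add_one⟩)
  have lt₂₃ : y₂ < y₃ := by linarith [hy₂.2, hy₃.1]
  have lt₃₁ : y₃ < y₁ := by linarith [hy₃.2, hy₁.1]
  have on_cubic {y : ℝ} (hy : h y = 0) :
      2 * y ^ 3 + (-3) * y ^ 2 + (-2 * a ^ 2) * y + (a ^ 2 + 1) = 0 := by
    rw [← hy, hh]; ring
  refine ⟨y₁, y₂, y₃, lt₂₃, lt₃₁, hy₁_root, hy₂_root, hy₃_root, fun y hy => ?_, hy₂, hy₃, hy₁⟩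
  exact eq_or_eq_or_eq_of_cubic_eq_zero two_ne_zero (by linarith) lt₃₁.ne' lt₂₃.ne
    (on_cubic hy₁_root) (on_cubic hy₂_root) (on_cubic hy₃_root) (on_cubic hy)
end

section
/- Let σ > 0 and W > 0 be real numbers, and define the function F : ℝ → ℝ by F(b) = 1 / (σ² + W²/(2^b − 1)²). Then F is concave on the interval [log₂(W/σ + 1), ∞). -/
/-!
With `a = W/σ` and `t = 2^b − 1`, the weight is `F(b) = f(b)/σ²` where `f(b) = t²/(t² + a²)`
(valid as soon as `t ≠ 0`). Since `dt/db = (t + 1) log 2`, differentiating twice gives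
`f'' = 2 a² (log 2)² (t + 1) ((2t + 1)(a² − t²) − 2t²) / (t² + a²)³`,
which is `≤ 0` once `t ≥ a`, i.e. once `b ≥ log₂(a + 1)`.
-/

open Real Set

section

variable {a : ℝ}

lemma hasDerivAt_two_rpow_sub_one (x : ℝ) :
    HasDerivAt (fun x : ℝ => (2 : ℝ) ^ x - 1) (((2 : ℝ) ^ x - 1 + 1) * log 2) x :=
  ((hasStrictDerivAt_const_rpow two_pos x).hasDerivAt.sub_const 1).congr_deriv (by ring)

lemma hasDerivAt_mul_add_one_div_sq_add_sq_sq (ha : a ≠ 0) (t : ℝ) :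
    HasDerivAt (fun t : ℝ => t * (t + 1) / (t ^ 2 + a ^ 2) ^ 2)
      (((2 * t + 1) * (a ^ 2 - t ^ 2) - 2 * t ^ 2) / (t ^ 2 + a ^ 2) ^ 3) t := by
  have hnum : HasDerivAt (fun t : ℝ => t * (t + 1)) (1 * (t + 1) + t * 1) t :=
    (hasDerivAt_id' t).mul ((hasDerivAt_id' t).add_const 1)
  have hden :
      HasDerivAt (fun t : ℝ => (t ^ 2 + a ^ 2) ^ 2) (2 * (t ^ 2 + a ^ 2) * (2 * t)) t := by
    simpa using ((hasDerivAt_pow 2 t).add_const (a ^ 2)).fun_pow 2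
  refine (hnum.div hden (by positivity)).congr_deriv ?_
  field_simp
  ring

lemma concaveOn_two_rpow_sub_one_sq_div (ha : 0 < a) :
    ConcaveOn ℝ (Ici (logb 2 (a + 1)))
      (fun x : ℝ => ((2 : ℝ) ^ x - 1) ^ 2 / (((2 : ℝ) ^ x - 1) ^ 2 + a ^ 2)) := by
  have hf (x : ℝ) :
      HasDerivAt (fun x : ℝ => ((2 : ℝ) ^ x - 1) ^ 2 / (((2 : ℝ) ^ x - 1) ^ 2 + a ^ 2))
      (2 * log 2 * a ^ 2 * (((2 : ℝ) ^ x - 1) * ((2 : ℝ) ^ x - 1 + 1) /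
        (((2 : ℝ) ^ x - 1) ^ 2 + a ^ 2) ^ 2)) x :=
    ((hasDerivAt_sq_div_sq_add_sq ha.ne' _).comp x (hasDerivAt_two_rpow_sub_one x)).congr_deriv
      (by ring)
  have hf' (x : ℝ) : HasDerivAt (fun x : ℝ => 2 * log 2 * a ^ 2 * (((2 : ℝ) ^ x - 1) *
        ((2 : ℝ) ^ x - 1 + 1) / (((2 : ℝ) ^ x - 1) ^ 2 + a ^ 2) ^ 2))
      (2 * log 2 ^ 2 * a ^ 2 * ((2 : ℝ) ^ x - 1 + 1) *
        (((2 * ((2 : ℝ) ^ x - 1) + 1) * (a ^ 2 - ((2 : ℝ) ^ x - 1) ^ 2) -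
          2 * ((2 : ℝ) ^ x - 1) ^ 2) / (((2 : ℝ) ^ x - 1) ^ 2 + a ^ 2) ^ 3)) x :=
    (((hasDerivAt_mul_add_one_div_sq_add_sq_sq ha.ne' _).comp x
      (hasDerivAt_two_rpow_sub_one x)).const_mul _).congr_deriv (by ring)
  refine concaveOn_of_hasDerivWithinAt2_nonpos (convex_Ici _)
    (fun x _ => (hf x).continuousAt.continuousWithinAt)
    (fun x _ => (hf x).hasDerivWithinAt) (fun x _ => (hf' x).hasDerivWithinAt) ?_
  intro x hx
  rw [interior_Ici, mem_Ioi, logb_lt_iff_lt_rpow one_lt_two (by positivity)] at hx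
  set t := (2 : ℝ) ^ x - 1
  have hat : a ≤ t := by linarith
  have hsq : a ^ 2 - t ^ 2 ≤ 0 := by nlinarith
  have hbracket : (2 * t + 1) * (a ^ 2 - t ^ 2) - 2 * t ^ 2 ≤ 0 := by nlinarith
  have ht : 0 ≤ t + 1 := by linarith
  exact mul_nonpos_of_nonneg_of_nonpos (by positivity)
    (div_nonpos_of_nonpos_of_nonneg hbracket (by positivity))

end

/-- For `σ > 0` and `W > 0`, the Fisher-information weight
`F(b) = 1 / (σ² + W²/(2^b − 1)²)` is concave on `[log₂(W/σ + 1), ∞)`. -/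
theorem stmt_5 (σ W : ℝ) (hσ : 0 < σ) (hW : 0 < W) :
    ConcaveOn ℝ (Set.Ici (Real.logb 2 (W / σ + 1)))
      (fun b : ℝ => 1 / (σ ^ 2 + W ^ 2 / ((2 : ℝ) ^ b - 1) ^ 2)) := by
  refine ((concaveOn_two_rpow_sub_one_sq_div (div_pos hW hσ)).smul
    (inv_nonneg.mpr (sq_nonneg σ))).congr fun b hb => ?_
  rw [mem_Ici, logb_le_iff_le_rpow one_lt_two (by positivity)] at hb
  have ht : 0 < (2 : ℝ) ^ b - 1 := by linarith [div_pos hW hσ]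
  simp only [smul_eq_mul]
  field_simp
end

section
/- Let E be a real vector space, S ⊆ E a convex set, n a natural number, and g : E → Matrix (Fin n) (Fin n) ℝ a map such that g(x) is symmetric and positive definite for every x ∈ S, and g is matrix-concave on S with respect to the Loewner order: for all x, y ∈ S and all t ∈ [0, 1], g(t·x + (1 − t)·y) − (t·g(x) + (1 − t)·g(y)) is positive semidefinite. Then the function x ↦ trace((g x)⁻¹) is convex on S. -/
/-!
For positive definite `A`, completing the square gives `vᵀA⁻¹v = max_w (2 wᵀv - wᵀAw)`, the
maximum being attained at `w = A⁻¹v`. Each function `A ↦ 2 wᵀv - wᵀAw` is affine and antitone in the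
Loewner order, so composed with the Loewner-concave `g` it is convex; hence so is the pointwise
maximum `x ↦ vᵀ(g x)⁻¹v`, and summing over the standard basis vectors `v` gives the trace.
-/

namespace Matrix

variable {m : Type*} [Fintype m] [DecidableEq m]

omit [DecidableEq m] in
lemma IsSymm.dotProduct_mulVec_comm {R : Type*} [CommSemiring R] {A : Matrix m m R}
    (hA : A.IsSymm) (u w : m → R) : u ⬝ᵥ (A *ᵥ w) = w ⬝ᵥ (A *ᵥ u) := by
  rw [dotProduct_mulVec, ← mulVec_transpose, hA.eq, dotProduct_comm]

lemma mulVec_nonsing_inv_mulVec {R : Type*} [CommRing R] {A : Matrix m m R}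
    (hA : IsUnit A.det) (v : m → R) : A *ᵥ (A⁻¹ *ᵥ v) = v := by
  rw [mulVec_mulVec, mul_nonsing_inv _ hA, one_mulVec]

lemma IsSymm.dotProduct_nonsing_inv_mulVec_eq_sub_add {A : Matrix m m ℝ} (hA : A.IsSymm)
    (hdet : IsUnit A.det) (v w : m → ℝ) :
    v ⬝ᵥ (A⁻¹ *ᵥ v) = 2 * (w ⬝ᵥ v) - w ⬝ᵥ (A *ᵥ w)
      + (w - A⁻¹ *ᵥ v) ⬝ᵥ (A *ᵥ (w - A⁻¹ *ᵥ v)) := by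
  have hAu := mulVec_nonsing_inv_mulVec hdet v
  simp only [mulVec_sub, dotProduct_sub, sub_dotProduct, hAu,
    hA.dotProduct_mulVec_comm (A⁻¹ *ᵥ v) w, dotProduct_comm _ v]
  ring

lemma PosDef.two_mul_dotProduct_sub_le {A : Matrix m m ℝ} (hA : A.PosDef) (v w : m → ℝ) :
    2 * (w ⬝ᵥ v) - w ⬝ᵥ (A *ᵥ w) ≤ v ⬝ᵥ (A⁻¹ *ᵥ v) := by
  rw [(isHermitian_iff_isSymm.mp hA.isHermitian).dotProduct_nonsing_inv_mulVec_eq_sub_add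
    ((isUnit_iff_isUnit_det A).mp hA.isUnit) v w]
  simpa using hA.posSemidef.dotProduct_mulVec_nonneg (w - A⁻¹ *ᵥ v)

lemma PosDef.dotProduct_nonsing_inv_mulVec_eq_two_mul_sub {A : Matrix m m ℝ} (hA : A.PosDef)
    (v : m → ℝ) :
    v ⬝ᵥ (A⁻¹ *ᵥ v) = 2 * ((A⁻¹ *ᵥ v) ⬝ᵥ v) - (A⁻¹ *ᵥ v) ⬝ᵥ (A *ᵥ (A⁻¹ *ᵥ v)) := by
  simpa using (isHermitian_iff_isSymm.mp hA.isHermitian).dotProduct_nonsing_inv_mulVec_eq_sub_add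
    ((isUnit_iff_isUnit_det A).mp hA.isUnit) v (A⁻¹ *ᵥ v)

lemma PosDef.dotProduct_nonsing_inv_mulVec_le_of_posSemidef_sub {A B C : Matrix m m ℝ}
    (hA : A.PosDef) (hB : B.PosDef) (hC : C.PosDef) {a b : ℝ} (ha : 0 ≤ a) (hb : 0 ≤ b)
    (hab : a + b = 1) (hABC : (A - (a • B + b • C)).PosSemidef) (v : m → ℝ) :
    v ⬝ᵥ (A⁻¹ *ᵥ v) ≤ a * (v ⬝ᵥ (B⁻¹ *ᵥ v)) + b * (v ⬝ᵥ (C⁻¹ *ᵥ v)) := by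
  set w := A⁻¹ *ᵥ v
  have hLoewner : a * (w ⬝ᵥ (B *ᵥ w)) + b * (w ⬝ᵥ (C *ᵥ w)) ≤ w ⬝ᵥ (A *ᵥ w) := by
    have := hABC.dotProduct_mulVec_nonneg w
    simp only [star_trivial, sub_mulVec, add_mulVec, smul_mulVec, dotProduct_sub,
      dotProduct_add, dotProduct_smul, smul_eq_mul] at this
    linarith
  have hB' := mul_le_mul_of_nonneg_left (hB.two_mul_dotProduct_sub_le v w) ha
  have hC' := mul_le_mul_of_nonneg_left (hC.two_mul_dotProduct_sub_le v w) hb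
  calc v ⬝ᵥ (A⁻¹ *ᵥ v) = 2 * (w ⬝ᵥ v) - w ⬝ᵥ (A *ᵥ w) :=
        hA.dotProduct_nonsing_inv_mulVec_eq_two_mul_sub v
    _ ≤ (a + b) * (2 * (w ⬝ᵥ v)) - (a * (w ⬝ᵥ (B *ᵥ w)) + b * (w ⬝ᵥ (C *ᵥ w))) := by
      rw [hab]; linarith
    _ ≤ a * (v ⬝ᵥ (B⁻¹ *ᵥ v)) + b * (v ⬝ᵥ (C⁻¹ *ᵥ v)) := by linarith

lemma PosDef.trace_nonsing_inv_le_of_posSemidef_sub {A B C : Matrix m m ℝ}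
    (hA : A.PosDef) (hB : B.PosDef) (hC : C.PosDef) {a b : ℝ} (ha : 0 ≤ a) (hb : 0 ≤ b)
    (hab : a + b = 1) (hABC : (A - (a • B + b • C)).PosSemidef) :
    A⁻¹.trace ≤ a * B⁻¹.trace + b * C⁻¹.trace := by
  have hdiag (M : Matrix m m ℝ) (i : m) : M i i = Pi.single i 1 ⬝ᵥ (M *ᵥ Pi.single i 1) := by
    simp
  simp only [trace, diag, Finset.mul_sum, ← Finset.sum_add_distrib, hdiag]
  exact Finset.sum_le_sum fun i _ =>
    hA.dotProduct_nonsing_inv_mulVec_le_of_posSemidef_sub hB hC ha hb hab hABC _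

end Matrix

theorem stmt_13_general {E : Type*} [AddCommGroup E] [Module ℝ E]
    (S : Set E) (hS : Convex ℝ S) (n : ℕ)
    (g : E → Matrix (Fin n) (Fin n) ℝ)
    (hpd : ∀ x ∈ S, (g x).PosDef)
    (hconc : ∀ x ∈ S, ∀ y ∈ S, ∀ t : ℝ, t ∈ Set.Icc (0 : ℝ) 1 →
      (g (t • x + (1 - t) • y) - (t • g x + (1 - t) • g y)).PosSemidef) :
    ConvexOn ℝ S (fun x => ((g x)⁻¹).trace) := by
  refine ⟨hS, fun x hx y hy a b ha hb hab => ?_⟩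
  obtain rfl : b = 1 - a := by linarith
  exact (hpd _ (hS hx hy ha hb hab)).trace_nonsing_inv_le_of_posSemidef_sub (hpd x hx) (hpd y hy)
    ha hb hab (hconc x hx y hy a ⟨ha, by linarith⟩)

/-- If `g` is a matrix-concave map (w.r.t. the Loewner order) on a convex set `S` whose
values on `S` are symmetric positive definite matrices, then `x ↦ trace((g x)⁻¹)` is
convex on `S`. -/
theorem stmt_13 {E : Type*} [AddCommGroup E] [Module ℝ E]
    (S : Set E) (hS : Convex ℝ S) (n : ℕ)
    (g : E → Matrix (Fin n) (Fin n) ℝ)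
    (hsymm : ∀ x ∈ S, (g x).IsSymm)
    (hpd : ∀ x ∈ S, (g x).PosDef)
    (hconc : ∀ x ∈ S, ∀ y ∈ S, ∀ t : ℝ, t ∈ Set.Icc (0 : ℝ) 1 →
      (g (t • x + (1 - t) • y) - (t • g x + (1 - t) • g y)).PosSemidef) :
    ConvexOn ℝ S (fun x => ((g x)⁻¹).trace) :=
  stmt_13_general S hS n g hpd hconc
end
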